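/- arXiv:2306.04981 — 2 statements merged into one kernel-verified Lean document; each statement's English description precedes it below -/
import Mathlib

section
/- The target-loss function T(L), defined as the optimal value of the minimization of I(U;V) − I(U;W) over conditional distributions p(u|v) supported on E subject to E[ℓ(V,U,W)] ≤ L, is decreasing and convex as a function of L ∈ [0, ∞) (with value +∞ where infeasible). -/
open Real

noncomputable section

variable {V U W : Type*} [Fintype V] [Fintype U] [Fintype W]
  [DecidableEq V] [DecidableEq U]

/-- `q(u|v)` is a conditional distribution supported on the edge set `E`. -/
def CondDistOn (E : Finset (V × U)) (q : V → U → ℝ) : Prop :=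
  (∀ v u, 0 ≤ q v u) ∧ (∀ v, ∑ u, q v u = 1) ∧ (∀ v u, q v u ≠ 0 → (v, u) ∈ E)

/-- Generalized K-L divergence `GD_E(q‖r)`. -/
def GDE (E : Finset (V × U)) (p : V → ℝ) (pw : V → U → W → ℝ)
    (q : V → U → ℝ) (r : W → U → ℝ) : ℝ :=
  ∑ v, ∑ u, ∑ w, if (v, u) ∈ E then p v * q v u * pw v u w * Real.log (q v u / r w u) else 0

/-- Expected loss `Loss(q) = Σ p(v) q(u|v) ℓ̃(v,u)`. -/
def LossE (E : Finset (V × U)) (p : V → ℝ) (lt : V → U → ℝ) (q : V → U → ℝ) : ℝ :=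
  ∑ v, ∑ u, if (v, u) ∈ E then p v * q v u * lt v u else 0

/-- The joint distribution `p(v,u,w) = p(v) q(u|v) p(w|u,v)`. -/
def jointD (E : Finset (V × U)) (p : V → ℝ) (pw : V → U → W → ℝ) (q : V → U → ℝ)
    (v : V) (u : U) (w : W) : ℝ :=
  if (v, u) ∈ E then p v * q v u * pw v u w else 0

/-- Marginal `p(u)`. -/
def margU (p : V → ℝ) (q : V → U → ℝ) (u : U) : ℝ := ∑ v, p v * q v u

/-- Marginal `p(u,w)`. -/
def margUW (E : Finset (V × U)) (p : V → ℝ) (pw : V → U → W → ℝ) (q : V → U → ℝ)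
    (u : U) (w : W) : ℝ := ∑ v, jointD E p pw q v u w

/-- Marginal `p(w)`. -/
def margW (E : Finset (V × U)) (p : V → ℝ) (pw : V → U → W → ℝ) (q : V → U → ℝ)
    (w : W) : ℝ := ∑ u, margUW E p pw q u w

/-- Mutual information `I(U;V)`. -/
def IUV (p : V → ℝ) (q : V → U → ℝ) : ℝ :=
  ∑ v, ∑ u, p v * q v u * Real.log (q v u / margU p q u)

/-- Mutual information `I(U;W)`. -/
def IUW (E : Finset (V × U)) (p : V → ℝ) (pw : V → U → W → ℝ) (q : V → U → ℝ) : ℝ :=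
  ∑ u, ∑ w, margUW E p pw q u w *
    Real.log (margUW E p pw q u w / (margU p q u * margW E p pw q w))

/-- Objective `I(U;V) - I(U;W)`. -/
def Obj (E : Finset (V × U)) (p : V → ℝ) (pw : V → U → W → ℝ) (q : V → U → ℝ) : ℝ :=
  IUV p q - IUW E p pw q

/-- The induced conditional distribution `r*(q)(u|w)`. -/
def rstar (E : Finset (V × U)) (p : V → ℝ) (pw : V → U → W → ℝ) (q : V → U → ℝ)
    (w : W) (u : U) : ℝ := margUW E p pw q u w / margW E p pw q w

/-- Gibbs update `q_s^*(r)(u|v)`. -/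
def qstar (E : Finset (V × U)) (pw : V → U → W → ℝ) (lt : V → U → ℝ)
    (s : ℝ) (r : W → U → ℝ) (v : V) (u : U) : ℝ :=
  (if (v, u) ∈ E then Real.exp (-s * lt v u) * ∏ w', r w' u ^ pw v u w' else 0) /
  (∑ u', if (v, u') ∈ E then Real.exp (-s * lt v u') * ∏ w', r w' u' ^ pw v u' w' else 0)

/-- The penalty (Lagrangian) function `F_s(q,r)`. -/
def FPen (E : Finset (V × U)) (p : V → ℝ) (pw : V → U → W → ℝ) (lt : V → U → ℝ)
    (s : ℝ) (q : V → U → ℝ) (r : W → U → ℝ) : ℝ :=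
  GDE E p pw q r + s * LossE E p lt q

/-- Generalized K-L divergence between two conditional distributions on `E`. -/
def GDcond (E : Finset (V × U)) (p : V → ℝ) (q1 q2 : V → U → ℝ) : ℝ :=
  ∑ v, ∑ u, if (v, u) ∈ E then p v * q1 v u * Real.log (q1 v u / q2 v u) else 0

/-- Conditional K-L divergence `GD_q(r1‖r2)` weighted by `q(w)`. -/
def GDr (E : Finset (V × U)) (p : V → ℝ) (pw : V → U → W → ℝ) (q : V → U → ℝ)
    (r1 r2 : W → U → ℝ) : ℝ :=
  ∑ u, ∑ w, margW E p pw q w * r1 w u * Real.log (r1 w u / r2 w u)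

/-- The target-loss function `T(L)` (valued in `EReal`, `+∞` if infeasible). -/
def TL (E : Finset (V × U)) (p : V → ℝ) (pw : V → U → W → ℝ) (lt : V → U → ℝ)
    (L : ℝ) : EReal :=
  sInf {x : EReal | ∃ q, CondDistOn E q ∧ LossE E p lt q ≤ L ∧ x = (Obj E p pw q : EReal)}

/-!
The objective `I(U;V) - I(U;W) = H(U|W) - H(U|V)` is the minimum over conditionals `r(u|w)` of
`GD_E(q‖r)`, attained at the conditional `r*(q)` induced by `q` (Gibbs' inequality), and
`GD_E(q‖r)` is jointly convex in `(q, r)` by the log-sum inequality. Hence the objective is convex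
in `q`. The loss is linear in `q`, so mixing feasible points for `L₁` and `L₂` gives a feasible
point for the mixed level, and `T` is convex; it is decreasing because the feasible set grows with
`L`. Finally the objective is bounded below by `(1 - |U|) ∑ p(v)`, so `T` never takes the value
`⊥`, where the extended-real arithmetic `⊤ + ⊥ = ⊥` would break the inequality.
-/

theorem sub_le_mul_log_div {a b : ℝ} (ha : 0 ≤ a) (hb : 0 ≤ b) (hab : 0 < a → 0 < b) :
    a - b ≤ a * log (a / b) := by
  rcases ha.eq_or_lt with rfl | ha
  · simpa using hb
  have hb := hab ha
  calc a - b = b * (a / b - 1) := by field_simp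
    _ ≤ b * (a / b * log (a / b)) :=
      mul_le_mul_of_nonneg_left (self_sub_one_le_mul_log (div_pos ha hb).le) hb.le
    _ = a * log (a / b) := by field_simp

/-- `c ↦ a * log c - b * c` is maximal at `c = a / b`. -/
theorem mul_log_add_sub_mul_le_mul_log_div {a b c : ℝ} (ha : 0 ≤ a) (hb : 0 ≤ b)
    (hab : 0 < a → 0 < b) (hc : 0 < c) :
    a * log c + (a - b * c) ≤ a * log (a / b) := by
  rcases ha.eq_or_lt with rfl | ha
  · simpa using mul_nonneg hb hc.le
  have hbc := mul_pos (hab ha) hc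
  have := sub_le_mul_log_div ha.le hbc.le fun _ => hbc
  rw [← div_div, log_div (div_pos ha (hab ha)).ne' hc.ne'] at this
  linarith

theorem add_mul_log_div_add_le {a₁ a₂ b₁ b₂ : ℝ} (ha₁ : 0 ≤ a₁) (ha₂ : 0 ≤ a₂)
    (hb₁ : 0 ≤ b₁) (hb₂ : 0 ≤ b₂) (h₁ : 0 < a₁ → 0 < b₁) (h₂ : 0 < a₂ → 0 < b₂) :
    (a₁ + a₂) * log ((a₁ + a₂) / (b₁ + b₂)) ≤ a₁ * log (a₁ / b₁) + a₂ * log (a₂ / b₂) := by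
  rcases (add_nonneg ha₁ ha₂).eq_or_lt with hA | hA
  · obtain ⟨rfl, rfl⟩ : a₁ = 0 ∧ a₂ = 0 := ⟨by linarith, by linarith⟩
    simp
  have hB : 0 < b₁ + b₂ := by
    rcases ha₁.eq_or_lt with rfl | ha₁
    · linarith [h₂ (by linarith)]
    · linarith [h₁ ha₁]
  have hc : 0 < (a₁ + a₂) / (b₁ + b₂) := div_pos hA hB
  have t₁ := mul_log_add_sub_mul_le_mul_log_div ha₁ hb₁ h₁ hc
  have t₂ := mul_log_add_sub_mul_le_mul_log_div ha₂ hb₂ h₂ hc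
  have hBc : (b₁ + b₂) * ((a₁ + a₂) / (b₁ + b₂)) = a₁ + a₂ := mul_div_cancel₀ _ hB.ne'
  linarith

section Marginals

variable {E : Finset (V × U)} {p : V → ℝ} {pw : V → U → W → ℝ} {q : V → U → ℝ}

omit [Fintype V] [Fintype U] [Fintype W] in
theorem jointD_nonneg (hp : ∀ v, 0 ≤ p v) (hq : ∀ v u, 0 ≤ q v u)
    (hpw0 : ∀ v u w, 0 ≤ pw v u w) (v : V) (u : U) (w : W) : 0 ≤ jointD E p pw q v u w := by
  unfold jointD
  split_ifs
  exacts [mul_nonneg (mul_nonneg (hp v) (hq v u)) (hpw0 v u w), le_rfl]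

omit [Fintype U] [Fintype W] in
theorem jointD_le_margUW (hp : ∀ v, 0 ≤ p v) (hq : ∀ v u, 0 ≤ q v u)
    (hpw0 : ∀ v u w, 0 ≤ pw v u w) (v : V) (u : U) (w : W) :
    jointD E p pw q v u w ≤ margUW E p pw q u w :=
  Finset.single_le_sum (fun v _ => jointD_nonneg hp hq hpw0 v u w) (Finset.mem_univ v)

omit [Fintype U] [Fintype W] in
theorem margUW_nonneg (hp : ∀ v, 0 ≤ p v) (hq : ∀ v u, 0 ≤ q v u)
    (hpw0 : ∀ v u w, 0 ≤ pw v u w) (u : U) (w : W) : 0 ≤ margUW E p pw q u w :=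
  Finset.sum_nonneg fun v _ => jointD_nonneg hp hq hpw0 v u w

omit [Fintype W] in
theorem margW_nonneg (hp : ∀ v, 0 ≤ p v) (hq : ∀ v u, 0 ≤ q v u)
    (hpw0 : ∀ v u w, 0 ≤ pw v u w) (w : W) : 0 ≤ margW E p pw q w :=
  Finset.sum_nonneg fun u _ => margUW_nonneg hp hq hpw0 u w

omit [Fintype W] in
theorem margUW_le_margW (hp : ∀ v, 0 ≤ p v) (hq : ∀ v u, 0 ≤ q v u)
    (hpw0 : ∀ v u w, 0 ≤ pw v u w) (u : U) (w : W) :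
    margUW E p pw q u w ≤ margW E p pw q w :=
  Finset.single_le_sum (fun u _ => margUW_nonneg hp hq hpw0 u w) (Finset.mem_univ u)

omit [Fintype U] [Fintype W] in
theorem margUW_pos (hp : ∀ v, 0 < p v) (hq : ∀ v u, 0 ≤ q v u)
    (hpw0 : ∀ v u w, 0 ≤ pw v u w) {v : V} {u : U} {w : W} (hvu : (v, u) ∈ E)
    (hqvu : 0 < q v u) (hpw : 0 < pw v u w) : 0 < margUW E p pw q u w := by
  refine lt_of_lt_of_le ?_ (jointD_le_margUW (fun v => (hp v).le) hq hpw0 v u w)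
  rw [jointD, if_pos hvu]
  exact mul_pos (mul_pos (hp v) hqvu) hpw

theorem sum_margUW (hq : CondDistOn E q) (hpw1 : ∀ v u, (v, u) ∈ E → ∑ w, pw v u w = 1)
    (u : U) : ∑ w, margUW E p pw q u w = margU p q u := by
  unfold margUW jointD
  rw [Finset.sum_comm]
  refine Finset.sum_congr rfl fun v _ => ?_
  by_cases hvu : (v, u) ∈ E
  · simp only [hvu, if_true, ← Finset.mul_sum, hpw1 v u hvu, mul_one]
  · simp [hvu, not_imp_comm.1 (hq.2.2 v u) hvu]

omit [Fintype W] in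
theorem rstar_nonneg (hp : ∀ v, 0 ≤ p v) (hq : ∀ v u, 0 ≤ q v u)
    (hpw0 : ∀ v u w, 0 ≤ pw v u w) (w : W) (u : U) : 0 ≤ rstar E p pw q w u :=
  div_nonneg (margUW_nonneg hp hq hpw0 u w) (margW_nonneg hp hq hpw0 w)

omit [Fintype W] in
theorem rstar_le_one (hp : ∀ v, 0 ≤ p v) (hq : ∀ v u, 0 ≤ q v u)
    (hpw0 : ∀ v u w, 0 ≤ pw v u w) (w : W) (u : U) : rstar E p pw q w u ≤ 1 :=
  div_le_one_of_le₀ (margUW_le_margW hp hq hpw0 u w)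
    (margW_nonneg hp hq hpw0 w)

omit [Fintype W] in
theorem rstar_pos (hp : ∀ v, 0 ≤ p v) (hq : ∀ v u, 0 ≤ q v u)
    (hpw0 : ∀ v u w, 0 ≤ pw v u w) {u : U} {w : W} (h : 0 < margUW E p pw q u w) :
    0 < rstar E p pw q w u :=
  div_pos h (h.trans_le (margUW_le_margW hp hq hpw0 u w))

omit [Fintype W] in
theorem sum_rstar_le_one (w : W) : ∑ u, rstar E p pw q w u ≤ 1 := by
  simp only [rstar, ← Finset.sum_div]
  exact div_self_le_one _

omit [Fintype U] [Fintype W] in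
theorem margUW_smul_add_smul (q₁ q₂ : V → U → ℝ) (a b : ℝ) (u : U) (w : W) :
    margUW E p pw (a • q₁ + b • q₂) u w = a * margUW E p pw q₁ u w + b * margUW E p pw q₂ u w := by
  simp only [margUW, jointD, Finset.mul_sum, ← Finset.sum_add_distrib]
  refine Finset.sum_congr rfl fun v _ => ?_
  split_ifs
  · simp only [Pi.add_apply, Pi.smul_apply, smul_eq_mul]; ring
  · simp

theorem LossE_smul_add_smul (lt : V → U → ℝ) (q₁ q₂ : V → U → ℝ) (a b : ℝ) :
    LossE E p lt (a • q₁ + b • q₂) = a * LossE E p lt q₁ + b * LossE E p lt q₂ := by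
  simp only [LossE, Finset.mul_sum, ← Finset.sum_add_distrib]
  refine Finset.sum_congr rfl fun v _ => Finset.sum_congr rfl fun u _ => ?_
  split_ifs
  · simp only [Pi.add_apply, Pi.smul_apply, smul_eq_mul]; ring
  · simp

omit [Fintype V] [DecidableEq V] [DecidableEq U] in
theorem convex_setOf_condDistOn : Convex ℝ {q : V → U → ℝ | CondDistOn E q} := by
  intro q₁ (hq₁ : CondDistOn E q₁) q₂ (hq₂ : CondDistOn E q₂) a b ha hb hab
  have hmix : ∀ v u, (a • q₁ + b • q₂) v u = a * q₁ v u + b * q₂ v u := fun _ _ => rfl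
  refine ⟨fun v u => ?_, fun v => ?_, fun v u h => ?_⟩ <;> simp only [hmix] at *
  · exact add_nonneg (mul_nonneg ha (hq₁.1 v u)) (mul_nonneg hb (hq₂.1 v u))
  · rw [Finset.sum_add_distrib, ← Finset.mul_sum, ← Finset.mul_sum, hq₁.2.1 v, hq₂.2.1 v]
    linarith
  · by_cases h₁ : q₁ v u = 0
    · exact hq₂.2.2 v u fun h₂ => h (by rw [h₁, h₂]; ring)
    · exact hq₁.2.2 v u h₁

end Marginals

section Information

variable {E : Finset (V × U)} {p : V → ℝ} {pw : V → U → W → ℝ} {q : V → U → ℝ}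

/-- `-H(U|V)`. -/
def negCondEntropy (p : V → ℝ) (q : V → U → ℝ) : ℝ :=
  ∑ v, ∑ u, p v * q v u * log (q v u)

/-- `E[log r(U|W)]` under the joint law induced by `q`. -/
def expectedLog (E : Finset (V × U)) (p : V → ℝ) (pw : V → U → W → ℝ) (q : V → U → ℝ)
    (r : W → U → ℝ) : ℝ :=
  ∑ u, ∑ w, margUW E p pw q u w * log (r w u)

omit [DecidableEq V] [DecidableEq U] in
theorem IUV_eq (hp : ∀ v, 0 < p v) (hq : ∀ v u, 0 ≤ q v u) :
    IUV p q = negCondEntropy p q - ∑ u, margU p q u * log (margU p q u) := by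
  have hterm : ∀ v u, p v * q v u * log (q v u / margU p q u)
      = p v * q v u * log (q v u) - p v * q v u * log (margU p q u) := by
    intro v u
    rcases (hq v u).eq_or_lt with h | h
    · simp [← h]
    have hU : 0 < margU p q u := (mul_pos (hp v) h).trans_le <|
      Finset.single_le_sum (fun v _ => mul_nonneg (hp v).le (hq v u)) (Finset.mem_univ v)
    rw [log_div h.ne' hU.ne', mul_sub]
  simp only [IUV, negCondEntropy, hterm, Finset.sum_sub_distrib]
  congr 1
  rw [Finset.sum_comm]
  simp only [margU, Finset.sum_mul]

theorem IUW_eq (hp : ∀ v, 0 ≤ p v) (hq : CondDistOn E q) (hpw0 : ∀ v u w, 0 ≤ pw v u w)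
    (hpw1 : ∀ v u, (v, u) ∈ E → ∑ w, pw v u w = 1) :
    IUW E p pw q = expectedLog E p pw q (rstar E p pw q)
      - ∑ u, margU p q u * log (margU p q u) := by
  have hterm : ∀ u w, margUW E p pw q u w *
        log (margUW E p pw q u w / (margU p q u * margW E p pw q w))
      = margUW E p pw q u w * log (rstar E p pw q w u)
        - margUW E p pw q u w * log (margU p q u) := by
    intro u w
    rcases (margUW_nonneg hp hq.1 hpw0 u w).eq_or_lt with h | h
    · rw [← h, zero_mul, zero_mul, zero_mul, sub_zero]
    have hU : 0 < margU p q u := h.trans_le <| sum_margUW hq hpw1 u ▸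
      Finset.single_le_sum (fun w _ => margUW_nonneg hp hq.1 hpw0 u w) (Finset.mem_univ w)
    rw [mul_comm (margU p q u), ← div_div, ← rstar,
      log_div (rstar_pos hp hq.1 hpw0 h).ne' hU.ne', mul_sub]
  simp only [IUW, expectedLog, hterm, Finset.sum_sub_distrib, ← Finset.sum_mul, sum_margUW hq hpw1]

theorem Obj_eq (hp : ∀ v, 0 < p v) (hq : CondDistOn E q) (hpw0 : ∀ v u w, 0 ≤ pw v u w)
    (hpw1 : ∀ v u, (v, u) ∈ E → ∑ w, pw v u w = 1) :
    Obj E p pw q = negCondEntropy p q - expectedLog E p pw q (rstar E p pw q) := by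
  rw [Obj, IUV_eq hp hq.1, IUW_eq (fun v => (hp v).le) hq hpw0 hpw1]
  ring

theorem GDE_eq (hp : ∀ v, 0 < p v) (hq : CondDistOn E q) (hpw0 : ∀ v u w, 0 ≤ pw v u w)
    (hpw1 : ∀ v u, (v, u) ∈ E → ∑ w, pw v u w = 1) {r : W → U → ℝ}
    (hr : ∀ u w, 0 < margUW E p pw q u w → 0 < r w u) :
    GDE E p pw q r = negCondEntropy p q - expectedLog E p pw q r := by
  have hterm : ∀ v u w,
      (if (v, u) ∈ E then p v * q v u * pw v u w * log (q v u / r w u) else 0)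
        = (if (v, u) ∈ E then p v * q v u * log (q v u) * pw v u w else 0)
          - jointD E p pw q v u w * log (r w u) := by
    intro v u w
    unfold jointD
    split_ifs with hvu
    · rcases (hq.1 v u).eq_or_lt with hq0 | hq0
      · simp [← hq0]
      rcases (hpw0 v u w).eq_or_lt with hpw | hpw
      · simp [← hpw]
      rw [log_div hq0.ne' (hr u w (margUW_pos hp hq.1 hpw0 hvu hq0 hpw)).ne']
      ring
    · simp
  have hself : ∀ v u, ∑ w, (if (v, u) ∈ E then p v * q v u * log (q v u) * pw v u w else 0)
      = p v * q v u * log (q v u) := by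
    intro v u
    split_ifs with hvu
    · rw [← Finset.mul_sum, hpw1 v u hvu, mul_one]
    · simp [not_imp_comm.1 (hq.2.2 v u) hvu]
  simp only [GDE, hterm, Finset.sum_sub_distrib, hself, negCondEntropy, expectedLog, margUW,
    Finset.sum_mul]
  congr 1
  rw [Finset.sum_comm]
  exact Finset.sum_congr rfl fun u _ => Finset.sum_comm

theorem GDE_rstar_eq_Obj (hp : ∀ v, 0 < p v) (hq : CondDistOn E q) (hpw0 : ∀ v u w, 0 ≤ pw v u w)
    (hpw1 : ∀ v u, (v, u) ∈ E → ∑ w, pw v u w = 1) :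
    GDE E p pw q (rstar E p pw q) = Obj E p pw q := by
  rw [GDE_eq hp hq hpw0 hpw1 fun u w => rstar_pos (fun v => (hp v).le) hq.1 hpw0,
    Obj_eq hp hq hpw0 hpw1]

end Information

section Convexity

variable {E : Finset (V × U)} {p : V → ℝ} {pw : V → U → W → ℝ} {q : V → U → ℝ}

/-- Gibbs' inequality, conditionally on `W`. -/
theorem expectedLog_le_expectedLog_rstar (hp : ∀ v, 0 ≤ p v) (hq : ∀ v u, 0 ≤ q v u)
    (hpw0 : ∀ v u w, 0 ≤ pw v u w) {r : W → U → ℝ} (hr0 : ∀ w u, 0 ≤ r w u)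
    (hr1 : ∀ w, ∑ u, r w u ≤ 1) (hr : ∀ u w, 0 < margUW E p pw q u w → 0 < r w u) :
    expectedLog E p pw q r ≤ expectedLog E p pw q (rstar E p pw q) := by
  unfold expectedLog
  rw [Finset.sum_comm, Finset.sum_comm (f := fun u w => _ * log (rstar E p pw q w u))]
  refine Finset.sum_le_sum fun w _ => ?_
  have hterm : ∀ u, margUW E p pw q u w * log (r w u)
      + (margUW E p pw q u w - margW E p pw q w * r w u)
        ≤ margUW E p pw q u w * log (rstar E p pw q w u) := by
    intro u
    rcases (margUW_nonneg hp hq hpw0 u w).eq_or_lt with h | h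
    · rw [← h]
      simpa using mul_nonneg (margW_nonneg hp hq hpw0 w) (hr0 w u)
    exact mul_log_add_sub_mul_le_mul_log_div h.le (h.trans_le (margUW_le_margW hp hq hpw0 u w)).le
      (fun _ => h.trans_le (margUW_le_margW hp hq hpw0 u w)) (hr u w h)
  have hslack : 0 ≤ ∑ u, (margUW E p pw q u w - margW E p pw q w * r w u) := by
    rw [Finset.sum_sub_distrib, ← Finset.mul_sum, ← margW]
    nlinarith [hr1 w, margW_nonneg (E := E) hp hq hpw0 w]
  have := Finset.sum_le_sum fun u (_ : u ∈ Finset.univ) => hterm u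
  rw [Finset.sum_add_distrib] at this
  linarith

theorem Obj_le_GDE (hp : ∀ v, 0 < p v) (hq : CondDistOn E q) (hpw0 : ∀ v u w, 0 ≤ pw v u w)
    (hpw1 : ∀ v u, (v, u) ∈ E → ∑ w, pw v u w = 1) {r : W → U → ℝ} (hr0 : ∀ w u, 0 ≤ r w u)
    (hr1 : ∀ w, ∑ u, r w u ≤ 1) (hr : ∀ u w, 0 < margUW E p pw q u w → 0 < r w u) :
    Obj E p pw q ≤ GDE E p pw q r := by
  rw [Obj_eq hp hq hpw0 hpw1, GDE_eq hp hq hpw0 hpw1 hr]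
  linarith [expectedLog_le_expectedLog_rstar (fun v => (hp v).le) hq.1 hpw0 hr0 hr1 hr]

omit [DecidableEq V] [DecidableEq U] in
theorem one_sub_card_mul_sum_le_negCondEntropy (hp : ∀ v, 0 ≤ p v) (hq : ∀ v u, 0 ≤ q v u)
    (hq1 : ∀ v, ∑ u, q v u = 1) :
    (1 - Fintype.card U) * ∑ v, p v ≤ negCondEntropy p q := by
  rw [Finset.mul_sum]
  refine Finset.sum_le_sum fun v _ => ?_
  calc (1 - Fintype.card U) * p v = p v * ∑ u, (q v u - 1) := by
        rw [Finset.sum_sub_distrib, hq1 v, Finset.sum_const, Finset.card_univ, nsmul_one]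
        ring
    _ ≤ ∑ u, p v * q v u * log (q v u) := by
        rw [Finset.mul_sum]
        refine Finset.sum_le_sum fun u _ => ?_
        rw [mul_assoc]
        exact mul_le_mul_of_nonneg_left (self_sub_one_le_mul_log (hq v u)) (hp v)

theorem one_sub_card_mul_sum_le_Obj (hp : ∀ v, 0 < p v) (hq : CondDistOn E q)
    (hpw0 : ∀ v u w, 0 ≤ pw v u w) (hpw1 : ∀ v u, (v, u) ∈ E → ∑ w, pw v u w = 1) :
    (1 - Fintype.card U) * ∑ v, p v ≤ Obj E p pw q := by
  have hp' : ∀ v, 0 ≤ p v := fun v => (hp v).le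
  have hlog : expectedLog E p pw q (rstar E p pw q) ≤ 0 :=
    Finset.sum_nonpos fun u _ => Finset.sum_nonpos fun w _ =>
      mul_nonpos_of_nonneg_of_nonpos (margUW_nonneg hp' hq.1 hpw0 u w)
        (log_nonpos (rstar_nonneg hp' hq.1 hpw0 w u) (rstar_le_one hp' hq.1 hpw0 w u))
  rw [Obj_eq hp hq hpw0 hpw1]
  linarith [one_sub_card_mul_sum_le_negCondEntropy hp' hq.1 hq.2.1]

theorem GDE_smul_add_smul_le (hp : ∀ v, 0 < p v) (hpw0 : ∀ v u w, 0 ≤ pw v u w)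
    {q₁ q₂ : V → U → ℝ} {r₁ r₂ : W → U → ℝ} (hq₁ : ∀ v u, 0 ≤ q₁ v u) (hq₂ : ∀ v u, 0 ≤ q₂ v u)
    (hr₁ : ∀ w u, 0 ≤ r₁ w u) (hr₂ : ∀ w u, 0 ≤ r₂ w u)
    (hqr₁ : ∀ u w, 0 < margUW E p pw q₁ u w → 0 < r₁ w u)
    (hqr₂ : ∀ u w, 0 < margUW E p pw q₂ u w → 0 < r₂ w u) {a b : ℝ} (ha : 0 < a) (hb : 0 < b) :
    GDE E p pw (a • q₁ + b • q₂) (a • r₁ + b • r₂)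
      ≤ a * GDE E p pw q₁ r₁ + b * GDE E p pw q₂ r₂ := by
  simp only [GDE, Finset.mul_sum, ← Finset.sum_add_distrib]
  gcongr with v _ u _ w _
  split_ifs with hvu
  · rcases (hpw0 v u w).eq_or_lt with hpw | hpw
    · simp [← hpw]
    have hsum := add_mul_log_div_add_le (mul_nonneg ha.le (hq₁ v u)) (mul_nonneg hb.le (hq₂ v u))
      (mul_nonneg ha.le (hr₁ w u)) (mul_nonneg hb.le (hr₂ w u))
      (fun h => mul_pos ha <| hqr₁ u w <|
        margUW_pos hp hq₁ hpw0 hvu (pos_of_mul_pos_right h ha.le) hpw)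
      (fun h => mul_pos hb <| hqr₂ u w <|
        margUW_pos hp hq₂ hpw0 hvu (pos_of_mul_pos_right h hb.le) hpw)
    rw [mul_div_mul_left _ _ ha.ne', mul_div_mul_left _ _ hb.ne'] at hsum
    have hpp : 0 ≤ p v * pw v u w := mul_nonneg (hp v).le hpw.le
    calc p v * (a • q₁ + b • q₂) v u * pw v u w
          * log ((a • q₁ + b • q₂) v u / (a • r₁ + b • r₂) w u)
        = p v * pw v u w * ((a * q₁ v u + b * q₂ v u)
            * log ((a * q₁ v u + b * q₂ v u) / (a * r₁ w u + b * r₂ w u))) := by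
          simp only [Pi.add_apply, Pi.smul_apply, smul_eq_mul]; ring
      _ ≤ p v * pw v u w * (a * q₁ v u * log (q₁ v u / r₁ w u)
            + b * q₂ v u * log (q₂ v u / r₂ w u)) := mul_le_mul_of_nonneg_left hsum hpp
      _ = _ := by ring
  · simp

theorem convexOn_Obj (hp : ∀ v, 0 < p v) (hpw0 : ∀ v u w, 0 ≤ pw v u w)
    (hpw1 : ∀ v u, (v, u) ∈ E → ∑ w, pw v u w = 1) :
    ConvexOn ℝ {q | CondDistOn E q} (Obj E p pw) := by
  refine convexOn_iff_forall_pos.2 ⟨convex_setOf_condDistOn, ?_⟩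
  intro q₁ (hq₁ : CondDistOn E q₁) q₂ (hq₂ : CondDistOn E q₂) a b ha hb hab
  have hp' : ∀ v, 0 ≤ p v := fun v => (hp v).le
  set r₁ := rstar E p pw q₁
  set r₂ := rstar E p pw q₂
  have hr₁ : ∀ w u, 0 ≤ r₁ w u := rstar_nonneg hp' hq₁.1 hpw0
  have hr₂ : ∀ w u, 0 ≤ r₂ w u := rstar_nonneg hp' hq₂.1 hpw0
  calc Obj E p pw (a • q₁ + b • q₂) ≤ GDE E p pw (a • q₁ + b • q₂) (a • r₁ + b • r₂) := by
        refine Obj_le_GDE hp (convex_setOf_condDistOn hq₁ hq₂ ha.le hb.le hab) hpw0 hpw1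
          (fun w u => ?_) (fun w => ?_) (fun u w h => ?_)
        · exact add_nonneg (mul_nonneg ha.le (hr₁ w u)) (mul_nonneg hb.le (hr₂ w u))
        · simp only [Pi.add_apply, Pi.smul_apply, smul_eq_mul, Finset.sum_add_distrib,
            ← Finset.mul_sum]
          nlinarith [sum_rstar_le_one (E := E) (p := p) (pw := pw) (q := q₁) w,
            sum_rstar_le_one (E := E) (p := p) (pw := pw) (q := q₂) w]
        · rw [margUW_smul_add_smul] at h
          simp only [Pi.add_apply, Pi.smul_apply, smul_eq_mul]
          rcases (margUW_nonneg hp' hq₁.1 hpw0 u w).eq_or_lt with h₁ | h₁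
          · have h₂ : 0 < margUW E p pw q₂ u w := by nlinarith
            nlinarith [hr₁ w u, rstar_pos hp' hq₂.1 hpw0 h₂]
          · nlinarith [hr₂ w u, rstar_pos hp' hq₁.1 hpw0 h₁]
    _ ≤ a * GDE E p pw q₁ r₁ + b * GDE E p pw q₂ r₂ :=
        GDE_smul_add_smul_le hp hpw0 hq₁.1 hq₂.1 hr₁ hr₂ (fun _ _ => rstar_pos hp' hq₁.1 hpw0)
          (fun _ _ => rstar_pos hp' hq₂.1 hpw0) ha hb
    _ = a • Obj E p pw q₁ + b • Obj E p pw q₂ := by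
        rw [GDE_rstar_eq_Obj hp hq₁ hpw0 hpw1, GDE_rstar_eq_Obj hp hq₂ hpw0 hpw1, smul_eq_mul,
          smul_eq_mul]

end Convexity

theorem le_mul_csInf_add_mul_csInf {s t : Set ℝ} (hs : s.Nonempty) (ht : t.Nonempty)
    {a b c : ℝ} (ha : 0 < a) (hb : 0 < b) (h : ∀ x ∈ s, ∀ y ∈ t, c ≤ a * x + b * y) :
    c ≤ a * sInf s + b * sInf t := by
  have hs' : ∀ y ∈ t, c - b * y ≤ a * sInf s := fun y hy => by
    rw [← div_le_iff₀' ha]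
    exact le_csInf hs fun x hx => by rw [div_le_iff₀' ha]; linarith [h x hx y hy]
  have ht' : c - a * sInf s ≤ b * sInf t := by
    rw [← div_le_iff₀' hb]
    exact le_csInf ht fun y hy => by rw [div_le_iff₀' hb]; linarith [hs' y hy]
  linarith

theorem EReal.sInf_image_coe {s : Set ℝ} (hs : s.Nonempty) (hb : BddBelow s) :
    sInf (((↑) : ℝ → EReal) '' s) = sInf s :=
  (EReal.coe_strictMono.monotone.map_csInf_of_continuousAt
    continuous_coe_real_ereal.continuousAt hs hb).symm

theorem EReal.coe_mul_sInf_image_coe_ne_bot {s : Set ℝ} (hb : BddBelow s) {a : ℝ} (ha : 0 < a) :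
    (a : EReal) * sInf (((↑) : ℝ → EReal) '' s) ≠ ⊥ := by
  rcases s.eq_empty_or_nonempty with rfl | hs
  · simp [EReal.coe_mul_top_of_pos ha]
  · rw [EReal.sInf_image_coe hs hb, ← EReal.coe_mul]
    exact EReal.coe_ne_bot _

theorem EReal.le_coe_mul_sInf_add_coe_mul_sInf {s t : Set ℝ} (hs : BddBelow s) (ht : BddBelow t)
    {a b : ℝ} (ha : 0 < a) (hb : 0 < b) {c : EReal}
    (h : ∀ x ∈ s, ∀ y ∈ t, c ≤ ((a * x + b * y : ℝ) : EReal)) :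
    c ≤ a * sInf (((↑) : ℝ → EReal) '' s) + b * sInf (((↑) : ℝ → EReal) '' t) := by
  rcases s.eq_empty_or_nonempty with rfl | hs'
  · rw [Set.image_empty, _root_.sInf_empty, EReal.coe_mul_top_of_pos ha,
      EReal.top_add_of_ne_bot (EReal.coe_mul_sInf_image_coe_ne_bot ht hb)]
    exact le_top
  rcases t.eq_empty_or_nonempty with rfl | ht'
  · rw [Set.image_empty, _root_.sInf_empty, EReal.coe_mul_top_of_pos hb,
      EReal.add_top_of_ne_bot (EReal.coe_mul_sInf_image_coe_ne_bot hs ha)]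
    exact le_top
  rw [EReal.sInf_image_coe hs' hs, EReal.sInf_image_coe ht' ht, ← EReal.coe_mul, ← EReal.coe_mul,
    ← EReal.coe_add]
  induction c using EReal.rec with
  | bot => exact bot_le
  | top =>
    obtain ⟨x, hx⟩ := hs'
    obtain ⟨y, hy⟩ := ht'
    exact absurd (h x hx y hy) (not_le.2 (EReal.coe_lt_top _))
  | coe c =>
    exact EReal.coe_le_coe_iff.2 <| le_mul_csInf_add_mul_csInf hs' ht' ha hb fun x hx y hy =>
      EReal.coe_le_coe_iff.1 (h x hx y hy)

section TargetLoss

variable {E : Finset (V × U)} {p : V → ℝ} {pw : V → U → W → ℝ} {lt : V → U → ℝ}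

theorem TL_eq_sInf_image (L : ℝ) :
    TL E p pw lt L = sInf (((↑) : ℝ → EReal) ''
      (Obj E p pw '' {q | CondDistOn E q ∧ LossE E p lt q ≤ L})) := by
  rw [TL, Set.image_image]
  congr 1
  ext x
  simp [and_assoc, eq_comm]

theorem TL_le_coe_Obj {L : ℝ} {q : V → U → ℝ} (hq : CondDistOn E q) (hL : LossE E p lt q ≤ L) :
    TL E p pw lt L ≤ Obj E p pw q :=
  sInf_le ⟨q, hq, hL, rfl⟩

theorem TL_antitone : Antitone (TL E p pw lt) := fun _ _ h12 =>
  sInf_le_sInf fun _ ⟨q, hq, hL, hx⟩ => ⟨q, hq, hL.trans h12, hx⟩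

end TargetLoss

theorem targetLoss_decreasing_convex_general
    (E : Finset (V × U))
    (p : V → ℝ) (hp : ∀ v, 0 < p v)
    (pw : V → U → W → ℝ) (hpw0 : ∀ v u w, 0 ≤ pw v u w)
    (hpw1 : ∀ v u, (v, u) ∈ E → ∑ w, pw v u w = 1)
    (lt : V → U → ℝ) :
    (∀ L1 L2 : ℝ, 0 ≤ L1 → L1 ≤ L2 →
        TL E p pw lt L2 ≤ TL E p pw lt L1)
      ∧ (∀ L1 L2 α : ℝ, 0 ≤ L1 → 0 ≤ L2 → 0 ≤ α → α ≤ 1 →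
        TL E p pw lt ((1 - α) * L1 + α * L2)
          ≤ ((1 - α : ℝ) : EReal) * TL E p pw lt L1 + ((α : ℝ) : EReal) * TL E p pw lt L2) := by
  refine ⟨fun L1 L2 _ h12 => TL_antitone h12, fun L1 L2 α _ _ hα0 hα1 => ?_⟩
  rcases hα0.eq_or_lt with rfl | hα0
  · simp
  rcases hα1.eq_or_lt with rfl | hα1
  · simp
  have hbdd : ∀ L, BddBelow (Obj E p pw '' {q | CondDistOn E q ∧ LossE E p lt q ≤ L}) :=
    fun L => ⟨_, by rintro _ ⟨q, ⟨hq, -⟩, rfl⟩; exact one_sub_card_mul_sum_le_Obj hp hq hpw0 hpw1⟩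
  rw [TL_eq_sInf_image L1, TL_eq_sInf_image L2]
  refine EReal.le_coe_mul_sInf_add_coe_mul_sInf (hbdd L1) (hbdd L2) (sub_pos.2 hα1) hα0 ?_
  rintro _ ⟨q₁, ⟨hq₁, hL₁⟩, rfl⟩ _ ⟨q₂, ⟨hq₂, hL₂⟩, rfl⟩
  have hmix := convex_setOf_condDistOn hq₁ hq₂ (sub_pos.2 hα1).le hα0.le (sub_add_cancel 1 α)
  have hloss : LossE E p lt ((1 - α) • q₁ + α • q₂) ≤ (1 - α) * L1 + α * L2 := by
    rw [LossE_smul_add_smul]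
    gcongr
  exact (TL_le_coe_Obj hmix hloss).trans <| EReal.coe_le_coe_iff.2 <|
    (convexOn_Obj hp hpw0 hpw1).2 hq₁ hq₂ (sub_pos.2 hα1).le hα0.le (sub_add_cancel 1 α)

/-- the target-loss function `T(L)` is decreasing and convex on `[0,∞)`
(with value `+∞` where infeasible). -/
theorem targetLoss_decreasing_convex
    (E : Finset (V × U)) (hE : ∀ v : V, ∃ u, (v, u) ∈ E)
    (p : V → ℝ) (hp : ∀ v, 0 < p v) (hp1 : ∑ v, p v = 1)
    (pw : V → U → W → ℝ) (hpw0 : ∀ v u w, 0 ≤ pw v u w)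
    (hpw1 : ∀ v u, (v, u) ∈ E → ∑ w, pw v u w = 1)
    (lt : V → U → ℝ) (hlt : ∀ v u, 0 ≤ lt v u) :
    (∀ L1 L2 : ℝ, 0 ≤ L1 → L1 ≤ L2 →
        TL E p pw lt L2 ≤ TL E p pw lt L1)
      ∧ (∀ L1 L2 α : ℝ, 0 ≤ L1 → 0 ≤ L2 → 0 ≤ α → α ≤ 1 →
        TL E p pw lt ((1 - α) * L1 + α * L2)
          ≤ ((1 - α : ℝ) : EReal) * TL E p pw lt L1 + ((α : ℝ) : EReal) * TL E p pw lt L2) :=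
  targetLoss_decreasing_convex_general E p hp pw hpw0 hpw1 lt
end
end

section
/- (Validity of the multiplier update strategy.) Suppose s^{(n)} is chosen by: if G_{r^{(n-1)}}(0) ≤ L set s^{(n)} = 0; otherwise take s^{(n)} ≥ 0 solving G_{r^{(n-1)}}(s) = L, where G_r(s) = Loss(q_s*(r)). Then for every optimal solution (q⁰, r⁰) of the constrained problem min_{Loss(q)≤L} GD_E(q||r) with associated KKT multiplier s* (so that s* ≥ 0, and either L ≤ L_max with Loss(q⁰) = L, or L > L_max with s* = 0 and Loss(q⁰) ≤ L), the discriminant Δ_n(q⁰) = (s^{(n)} − s*)(Loss(q^{(n)}) − Loss(q⁰)) is nonnegative, where q^{(n)} = q_{s^{(n)}}*(r^{(n-1)}) so that Loss(q^{(n)}) = G_{r^{(n-1)}}(s^{(n)}). -/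
open Real

noncomputable section

variable {V U W : Type*} [Fintype V] [Fintype U] [Fintype W]
  [DecidableEq V] [DecidableEq U]

theorem discriminant_nonneg_of_strategy_of_kkt {G : ℝ → ℝ} {L ℓ₀ s sstar : ℝ}
    (hs : (G 0 ≤ L ∧ s = 0) ∨ (0 ≤ s ∧ G s = L)) (hsstar : 0 ≤ sstar)
    (hKKT : ℓ₀ = L ∨ (sstar = 0 ∧ ℓ₀ ≤ L)) :
    0 ≤ (s - sstar) * (G s - ℓ₀) := by
  rcases hs with ⟨hG0, rfl⟩ | ⟨hs, hGs⟩ <;> rcases hKKT with rfl | ⟨rfl, hℓ₀⟩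
  · exact mul_nonneg_of_nonpos_of_nonpos (by linarith) (by linarith)
  · simp
  · rw [hGs, sub_self, mul_zero]
  · exact mul_nonneg (by linarith) (by linarith)

theorem multiplier_strategy_valid_general
    (E : Finset (V × U))
    (p : V → ℝ)
    (pw : V → U → W → ℝ)
    (lt : V → U → ℝ)
    (L Lmax : ℝ)
    -- the previous iterate r^{(n-1)}
    (r : W → U → ℝ)
    -- the multiplier s^{(n)} chosen by the strategy, where
    -- G_r(s) = Loss(q_s^*(r))
    (sn : ℝ)
    (hsn : (LossE E p lt (qstar E pw lt 0 r) ≤ L ∧ sn = 0)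
      ∨ (L < LossE E p lt (qstar E pw lt 0 r) ∧ 0 ≤ sn
          ∧ LossE E p lt (qstar E pw lt sn r) = L))
    -- an optimal solution q⁰ with KKT multiplier s*
    (q0 : V → U → ℝ)
    (sstar : ℝ) (hsstar : 0 ≤ sstar)
    (hKKT : (L ≤ Lmax ∧ LossE E p lt q0 = L)
      ∨ (Lmax < L ∧ sstar = 0 ∧ LossE E p lt q0 ≤ L)) :
    0 ≤ (sn - sstar) * (LossE E p lt (qstar E pw lt sn r) - LossE E p lt q0) :=
  discriminant_nonneg_of_strategy_of_kkt (G := fun s => LossE E p lt (qstar E pw lt s r))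
    (hsn.imp id And.right) hsstar (hKKT.imp And.right And.right)

/-- validity of the multiplier update strategy — the chosen `s⁽ⁿ⁾`
makes the discriminant `Δ_n(q⁰) = (s⁽ⁿ⁾ − s*)(Loss(q⁽ⁿ⁾) − Loss(q⁰))` nonnegative
for every KKT-optimal `(q⁰, s*)`. -/
theorem multiplier_strategy_valid
    (E : Finset (V × U)) (hE : ∀ v : V, ∃ u, (v, u) ∈ E)
    (p : V → ℝ) (hp : ∀ v, 0 < p v) (hp1 : ∑ v, p v = 1)
    (pw : V → U → W → ℝ) (hpw0 : ∀ v u w, 0 ≤ pw v u w)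
    (hpw1 : ∀ v u, (v, u) ∈ E → ∑ w, pw v u w = 1)
    (lt : V → U → ℝ) (hlt : ∀ v u, 0 ≤ lt v u)
    (L Lmax : ℝ)
    -- the previous iterate r^{(n-1)}
    (r : W → U → ℝ)
    -- the multiplier s^{(n)} chosen by the strategy, where
    -- G_r(s) = Loss(q_s^*(r))
    (sn : ℝ)
    (hsn : (LossE E p lt (qstar E pw lt 0 r) ≤ L ∧ sn = 0)
      ∨ (L < LossE E p lt (qstar E pw lt 0 r) ∧ 0 ≤ sn
          ∧ LossE E p lt (qstar E pw lt sn r) = L))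
    -- an optimal solution q⁰ with KKT multiplier s*
    (q0 : V → U → ℝ) (hq0 : CondDistOn E q0)
    (sstar : ℝ) (hsstar : 0 ≤ sstar)
    (hKKT : (L ≤ Lmax ∧ LossE E p lt q0 = L)
      ∨ (Lmax < L ∧ sstar = 0 ∧ LossE E p lt q0 ≤ L)) :
    0 ≤ (sn - sstar) * (LossE E p lt (qstar E pw lt sn r) - LossE E p lt q0) :=
  multiplier_strategy_valid_general E p pw lt L Lmax r sn hsn q0 sstar hsstar hKKT
end
end
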